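/- arXiv:1605.09462 — 2 statements merged into one kernel-verified Lean document; each statement's English description precedes it below -/
import Mathlib

section
/- Key flipping inequality: under the GQSS assumptions (A ≥ 0 entrywise, W, A symmetric, W ∘ A = 0), suppose x ∈ {0,1}ⁿ satisfies x_p = x_q = 1 for some p ≠ q with A_{pq} ≠ 0, and let x̃ be x with coordinate p set to 0. Then for L(λ,x) = xᵀWx − λ·xᵀAx, one has L(λ, x̃) ≥ L(λ, x) − W_{pp} − 2 Σ_{j ∉ N(p), j ≠ p} W_{pj} x_j + 2λ A_{pq}, where N(p) = {j ≠ p : A_{pj} ≠ 0}. -/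
/-! Zeroing the coordinate `p` of `x` changes `xᵀMx` by `-2 (Mx)_p + M_pp` when `M` is symmetric.
Since `W` vanishes on the support of `A`, the row sum `(Wx)_p` only sees `W_pp` and the
non-neighbours of `p`; and `(Ax)_p ≥ A_pp + A_pq` because `A ≥ 0` and `x_p = x_q = 1`. -/

namespace Matrix

variable {ι R : Type*} [Fintype ι] [DecidableEq ι]

lemma IsSymm.dotProduct_mulVec_update_zero [CommRing R] {M : Matrix ι ι R} (hM : M.IsSymm)
    (x : ι → R) (p : ι) :
    Function.update x p 0 ⬝ᵥ M *ᵥ Function.update x p 0 =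
      x ⬝ᵥ M *ᵥ x - 2 * x p * (M *ᵥ x) p + x p ^ 2 * M p p := by
  have hupdate : Function.update x p 0 = x - Pi.single p (x p) := by
    ext i
    rcases eq_or_ne i p with rfl | hi <;> simp [Function.update_of_ne, *]
  have hcross : x ⬝ᵥ M *ᵥ Pi.single p (x p) = x p * (M *ᵥ x) p := by
    rw [dotProduct_mulVec, dotProduct_single, ← vecMul_transpose, hM.eq, mul_comm]
  rw [hupdate, mulVec_sub, dotProduct_sub, sub_dotProduct, sub_dotProduct, hcross,
    single_dotProduct, single_dotProduct, mulVec_single]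
  simp only [Pi.smul_apply, col_apply, op_smul_eq_mul]
  ring

lemma mulVec_apply_eq_diag_add_sum_filter [NonUnitalNonAssocSemiring R] [DecidableEq R]
    (W A : Matrix ι ι R) (x : ι → R) (p : ι) (hWA : ∀ j, A p j ≠ 0 → W p j = 0) :
    (W *ᵥ x) p = W p p * x p + ∑ j ∈ Finset.univ.filter (fun j => j ≠ p ∧ A p j = 0),
      W p j * x j := by
  have hsplit : ∀ j, W p j * x j = (if j = p then W p j * x j else 0) +
      (if j ≠ p ∧ A p j = 0 then W p j * x j else 0) := fun j => by
    by_cases hjp : j = p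
    · simp [hjp]
    · by_cases hAj : A p j = 0
      · simp [hjp, hAj]
      · simp [hjp, hAj, hWA j hAj]
  rw [mulVec, dotProduct, Finset.sum_congr rfl fun j _ => hsplit j, Finset.sum_add_distrib,
    Finset.sum_ite_eq', if_pos (Finset.mem_univ p), Finset.sum_filter]

end Matrix

open Matrix

theorem stmt_7_general (n : ℕ) (W A : Matrix (Fin n) (Fin n) ℝ)
    (hWsymm : W.IsSymm) (hAsymm : A.IsSymm)
    (hA : ∀ i j, 0 ≤ A i j)
    (hWA : ∀ i j, A i j ≠ 0 → W i j = 0)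
    (lam : ℝ) (hlam : 0 ≤ lam)
    (x : Fin n → ℝ) (hx : ∀ i, x i = 0 ∨ x i = 1)
    (p q : Fin n) (hpq : p ≠ q)
    (hxp : x p = 1) (hxq : x q = 1) :
    (Function.update x p 0) ⬝ᵥ W.mulVec (Function.update x p 0) -
      lam * ((Function.update x p 0) ⬝ᵥ A.mulVec (Function.update x p 0)) ≥
    (x ⬝ᵥ W.mulVec x - lam * (x ⬝ᵥ A.mulVec x)) - W p p -
      2 * (∑ j ∈ Finset.univ.filter (fun j => j ≠ p ∧ A p j = 0), W p j * x j) +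
      2 * lam * A p q := by
  have hx_nonneg : ∀ j, 0 ≤ x j := fun j => by rcases hx j with h | h <;> simp [h]
  have hArow : A p p + A p q ≤ (A *ᵥ x) p := by
    simpa [mulVec, dotProduct, hxp, hxq] using
      Finset.add_le_sum (fun j _ => mul_nonneg (hA p j) (hx_nonneg j))
        (Finset.mem_univ p) (Finset.mem_univ q) hpq
  rw [hWsymm.dotProduct_mulVec_update_zero, hAsymm.dotProduct_mulVec_update_zero,
    mulVec_apply_eq_diag_add_sum_filter W A x p (hWA p), hxp]
  linarith [mul_le_mul_of_nonneg_left hArow hlam, mul_nonneg hlam (hA p p)]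

theorem stmt_7 (n : ℕ) (W A : Matrix (Fin n) (Fin n) ℝ)
    (hWsymm : W.IsSymm) (hAsymm : A.IsSymm)
    (hA : ∀ i j, 0 ≤ A i j)
    (hWA : ∀ i j, A i j ≠ 0 → W i j = 0)
    (lam : ℝ) (hlam : 0 ≤ lam)
    (x : Fin n → ℝ) (hx : ∀ i, x i = 0 ∨ x i = 1)
    (p q : Fin n) (hpq : p ≠ q) (hApq : A p q ≠ 0)
    (hxp : x p = 1) (hxq : x q = 1) :
    (Function.update x p 0) ⬝ᵥ W.mulVec (Function.update x p 0) -
      lam * ((Function.update x p 0) ⬝ᵥ A.mulVec (Function.update x p 0)) ≥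
    (x ⬝ᵥ W.mulVec x - lam * (x ⬝ᵥ A.mulVec x)) - W p p -
      2 * (∑ j ∈ Finset.univ.filter (fun j => j ≠ p ∧ A p j = 0), W p j * x j) +
      2 * lam * A p q :=
  stmt_7_general n W A hWsymm hAsymm hA hWA lam hlam x hx p q hpq hxp hxq
end

section
/- Monotonicity of the Newtonian multiplier sequence: let W, A ∈ ℝ^{n×n} with A ≥ 0 entrywise, and define a sequence by λ⁰ = 0, x⁰ ∈ argmax_{x∈{0,1}ⁿ} xᵀWx, and for k ≥ 1, λ^k = (x^{k-1})ᵀW x^{k-1} / (x^{k-1})ᵀA x^{k-1} and x^k ∈ argmax_{x∈{0,1}ⁿ} [xᵀWx − λ^k xᵀAx], assuming (x^{k-1})ᵀA x^{k-1} ≠ 0 at every step where λ^k is formed. Then the sequence {λ^k} is nondecreasing. -/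
open Matrix

theorem stmt_12 (n : ℕ) (W A : Matrix (Fin n) (Fin n) ℝ)
    (hA : ∀ i j, 0 ≤ A i j)
    (lam : ℕ → ℝ) (xs : ℕ → (Fin n → ℝ))
    (hbin : ∀ k i, xs k i = 0 ∨ xs k i = 1)
    (hlam0 : lam 0 = 0)
    (hx0 : ∀ y : Fin n → ℝ, (∀ i, y i = 0 ∨ y i = 1) →
      y ⬝ᵥ W.mulVec y ≤ xs 0 ⬝ᵥ W.mulVec (xs 0))
    (hAne : ∀ k, xs k ⬝ᵥ A.mulVec (xs k) ≠ 0)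
    (hlam : ∀ k, lam (k + 1) = (xs k ⬝ᵥ W.mulVec (xs k)) / (xs k ⬝ᵥ A.mulVec (xs k)))
    (hxs : ∀ k, ∀ y : Fin n → ℝ, (∀ i, y i = 0 ∨ y i = 1) →
      y ⬝ᵥ W.mulVec y - lam (k + 1) * (y ⬝ᵥ A.mulVec y) ≤
      xs (k + 1) ⬝ᵥ W.mulVec (xs (k + 1)) - lam (k + 1) * (xs (k + 1) ⬝ᵥ A.mulVec (xs (k + 1)))) :
    Monotone lam := by
  -- A-quadratic form is positive on each xs k
  have hApos : ∀ k, 0 < xs k ⬝ᵥ A.mulVec (xs k) := by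
    intro k
    have hnn : 0 ≤ xs k ⬝ᵥ A.mulVec (xs k) := by
      simp only [dotProduct, mulVec]
      apply Finset.sum_nonneg
      intro i _
      apply mul_nonneg
      · rcases hbin k i with h | h <;> simp [h]
      · apply Finset.sum_nonneg
        intro j _
        apply mul_nonneg (hA i j)
        rcases hbin k j with h | h <;> simp [h]
    exact lt_of_le_of_ne hnn (Ne.symm (hAne k))
  apply monotone_nat_of_le_succ
  intro k
  rcases k with _ | m
  · -- lam 0 = 0 ≤ lam 1
    rw [hlam0, hlam 0]
    apply div_nonneg _ (le_of_lt (hApos 0))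
    have h0 : (0 : Fin n → ℝ) ⬝ᵥ W.mulVec 0 ≤ xs 0 ⬝ᵥ W.mulVec (xs 0) :=
      hx0 0 (fun i => Or.inl rfl)
    simpa using h0
  · -- lam (m+1) ≤ lam (m+2)
    have hmax := hxs m (xs m) (hbin m)
    have hzero : xs m ⬝ᵥ W.mulVec (xs m) - lam (m + 1) * (xs m ⬝ᵥ A.mulVec (xs m)) = 0 := by
      rw [hlam m, div_mul_cancel₀ _ (hAne m), sub_self]
    rw [hzero] at hmax
    rw [hlam (m + 1), le_div_iff₀ (hApos (m + 1))]
    linarith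
end
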